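/- arXiv:math/9710213 — 4 statements merged into one kernel-verified Lean document; each statement's English description precedes it below -/
import Mathlib

section
/- For integers 0=e_0, e_1,...,e_k (nonnegative integers, not all zero) and any fixed j with 1 ≤ j ≤ k, one has the inequality ∑_{i=1}^k e_i(e_i - e_{i-1}) ≥ e_j. -/
/-!
Doubling the sum and writing `2 a (a - b) = (a² - b²) + (a - b)²` turns it into
`e_k² + ∑ (e_i - e_{i-1})²`. For integers `|x| ≤ x²`, so this is at least
`|e_k| + ∑ |e_i - e_{i-1}|`, and the triangle inequality along `0 = e_0, …, e_j, …, e_k`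
bounds that from below by `|e_k| + |e_j| + |e_k - e_j| ≥ 2 |e_j|`.
-/

open Finset

theorem two_mul_sum_Icc_mul_sub {R : Type*} [CommRing R] (e : ℕ → R) (n : ℕ) :
    2 * ∑ i ∈ Icc 1 n, e i * (e i - e (i - 1)) =
      e n ^ 2 - e 0 ^ 2 + ∑ i ∈ Icc 1 n, (e i - e (i - 1)) ^ 2 := by
  induction n with
  | zero => simp
  | succ n ih =>
    rw [sum_Icc_succ_top (Nat.le_add_left 1 n), sum_Icc_succ_top (Nat.le_add_left 1 n), mul_add,
      ih, Nat.add_sub_cancel]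
    ring

theorem abs_sub_le_sum_Ioc_abs_sub {α : Type*} [AddCommGroup α] [LinearOrder α]
    [IsOrderedAddMonoid α] (e : ℕ → α) {m n : ℕ} (hmn : m ≤ n) :
    |e n - e m| ≤ ∑ i ∈ Ioc m n, |e i - e (i - 1)| := by
  induction n, hmn using Nat.le_induction with
  | base => simp
  | succ n hmn ih =>
    rw [sum_Ioc_succ_top hmn, Nat.add_sub_cancel]
    calc |e (n + 1) - e m|
        ≤ |e n - e m| + |e (n + 1) - e n| := (abs_sub_le _ (e n) _).trans_eq (add_comm _ _)
      _ ≤ _ := add_le_add_left ih _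

theorem Int.abs_le_sq (a : ℤ) : |a| ≤ a ^ 2 :=
  Int.natCast_natAbs a ▸ Int.natAbs_le_self_sq a

theorem sum_e_mul_sub_ge_general (k : ℕ) (e : ℕ → ℤ) (h0 : e 0 = 0)
    (j : ℕ) (hjk : j ≤ k) :
    e j ≤ ∑ i ∈ Finset.Icc 1 k, e i * (e i - e (i - 1)) := by
  have hsq : ∑ i ∈ Ioc 0 k, |e i - e (i - 1)| ≤ ∑ i ∈ Icc 1 k, (e i - e (i - 1)) ^ 2 := by
    rw [← Icc_add_one_left_eq_Ioc]
    exact sum_le_sum fun i _ => Int.abs_le_sq _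
  have hsplit := sum_Ioc_consecutive (fun i => |e i - e (i - 1)|) (Nat.zero_le j) hjk
  have hj := abs_sub_le_sum_Ioc_abs_sub e (Nat.zero_le j)
  have hkj := abs_sub_le_sum_Ioc_abs_sub e hjk
  have htri := abs_sub_abs_le_abs_sub (e j) (e k)
  have hdouble := two_mul_sum_Icc_mul_sub e k
  rw [h0, sub_zero] at hj
  rw [h0] at hdouble
  linarith [le_abs_self (e j), Int.abs_le_sq (e k), abs_sub_comm (e j) (e k)]

/-- For nonnegative integers `e 0 = 0, e 1, …, e k`, not all zero among `e 1, …, e k`,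
and any `1 ≤ j ≤ k`, one has `∑_{i=1}^k e i * (e i - e (i-1)) ≥ e j`. -/
theorem sum_e_mul_sub_ge (k : ℕ) (e : ℕ → ℤ) (hk : 1 ≤ k) (h0 : e 0 = 0)
    (hnonneg : ∀ i, 0 ≤ e i)
    (hnotzero : ∃ i, 1 ≤ i ∧ i ≤ k ∧ e i ≠ 0)
    (j : ℕ) (hj1 : 1 ≤ j) (hjk : j ≤ k) :
    e j ≤ ∑ i ∈ Finset.Icc 1 k, e i * (e i - e (i - 1)) :=
  sum_e_mul_sub_ge_general k e h0 j hjk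
end

section
/- Let y_1, ..., y_{k+1} be integers satisfying y_{k+1} = j + ∑_{i=1}^k y_i for a nonnegative integer j. Then ∑_{i=1}^{k+1} y_i^2 ≥ j. -/
theorem Int.neg_sum_le_sum_sq {ι : Type*} (s : Finset ι) (y : ι → ℤ) :
    -∑ i ∈ s, y i ≤ ∑ i ∈ s, y i ^ 2 := by
  rw [← Finset.sum_neg_distrib]
  exact Finset.sum_le_sum fun i _ => neg_sq (y i) ▸ Int.le_self_sq (-y i)

theorem sum_sq_ge_of_linear_constraint_general (k : ℕ) (j : ℕ) (y : ℕ → ℤ)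
    (hcon : y (k + 1) = (j : ℤ) + ∑ i ∈ Finset.Icc 1 k, y i) :
    (j : ℤ) ≤ ∑ i ∈ Finset.Icc 1 (k + 1), (y i) ^ 2 :=
  calc (j : ℤ) = y (k + 1) + -∑ i ∈ Finset.Icc 1 k, y i := by rw [hcon]; ring
    _ ≤ y (k + 1) ^ 2 + ∑ i ∈ Finset.Icc 1 k, y i ^ 2 :=
      add_le_add (Int.le_self_sq _) (Int.neg_sum_le_sum_sq _ y)
    _ = ∑ i ∈ Finset.Icc 1 (k + 1), y i ^ 2 := by
      rw [Finset.sum_Icc_succ_top (by omega), add_comm]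

/-- If integers `y 1, …, y (k+1)` satisfy `y (k+1) = j + ∑_{i=1}^k y i` for a nonnegative
integer `j`, then `∑_{i=1}^{k+1} (y i)^2 ≥ j`. -/
theorem sum_sq_ge_of_linear_constraint (k : ℕ) (hk : 1 ≤ k) (j : ℕ) (y : ℕ → ℤ)
    (hcon : y (k + 1) = (j : ℤ) + ∑ i ∈ Finset.Icc 1 k, y i) :
    (j : ℤ) ≤ ∑ i ∈ Finset.Icc 1 (k + 1), (y i) ^ 2 :=
  sum_sq_ge_of_linear_constraint_general k j y hcon
end

section
/- Let y_1, ..., y_{k+1} be integers with y_{k+1} = j + ∑_{i=1}^k y_i for a nonnegative integer j ≤ k. Equality ∑_{i=1}^{k+1} y_i^2 = j holds if and only if either (a) y_{k+1} = 0, exactly j of y_1,...,y_k equal -1 and the rest equal 0, or (b) y_{k+1} = 1, exactly j-1 of y_1,...,y_k equal -1 and the rest equal 0. -/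
/-!
Write `t = y (k+1)`. Using the constraint to eliminate `j`,
`∑_{i ≤ k+1} y_i² - j = ∑_{i ≤ k} (y_i² + y_i) + (t² - t)`,
and every summand `a² + a = a (a + 1)` is a nonnegative product of consecutive integers,
vanishing exactly for `a ∈ {-1, 0}`. So equality holds iff every `y_i ∈ {-1, 0}` and
`t ∈ {0, 1}`; then `∑_{i ≤ k} y_i` is minus the number of `-1`'s, and the constraint
reads `t = j - #{i | y_i = -1}`.
-/

open Finset

namespace Int

theorem sq_add_self_nonneg (a : ℤ) : 0 ≤ a ^ 2 + a := by
  rcases le_or_gt 0 a with h | h <;> nlinarith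

theorem sq_add_self_eq_zero_iff (a : ℤ) : a ^ 2 + a = 0 ↔ a = -1 ∨ a = 0 := by
  rw [show a ^ 2 + a = (a + 1) * a by ring, mul_eq_zero, add_eq_zero_iff_eq_neg]

end Int

theorem Finset.sum_sq_add_self_eq_zero_iff {ι : Type*} (s : Finset ι) (f : ι → ℤ) :
    ∑ i ∈ s, (f i ^ 2 + f i) = 0 ↔ ∀ i ∈ s, f i = -1 ∨ f i = 0 := by
  rw [sum_eq_zero_iff_of_nonneg fun i _ => Int.sq_add_self_nonneg (f i)]
  simp only [Int.sq_add_self_eq_zero_iff]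

theorem Finset.sum_eq_neg_card_filter_of_forall {ι : Type*} {s : Finset ι} {f : ι → ℤ}
    (hf : ∀ i ∈ s, f i = -1 ∨ f i = 0) : ∑ i ∈ s, f i = -#(s.filter fun i => f i = -1) := by
  rw [← sum_boole, ← sum_neg_distrib]
  refine sum_congr rfl fun i hi => ?_
  rcases hf i hi with h | h <;> simp [h]

theorem sum_sq_eq_iff_general (k j : ℕ) (y : ℕ → ℤ)
    (hcon : y (k + 1) = (j : ℤ) + ∑ i ∈ Finset.Icc 1 k, y i) :
    (∑ i ∈ Finset.Icc 1 (k + 1), (y i) ^ 2 = (j : ℤ)) ↔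
      ((y (k + 1) = 0 ∧ ((Finset.Icc 1 k).filter fun i => y i = -1).card = j ∧
          ∀ i ∈ Finset.Icc 1 k, y i = -1 ∨ y i = 0) ∨
       (y (k + 1) = 1 ∧ ((Finset.Icc 1 k).filter fun i => y i = -1).card + 1 = j ∧
          ∀ i ∈ Finset.Icc 1 k, y i = -1 ∨ y i = 0)) := by
  have hdefect : ∑ i ∈ Icc 1 (k + 1), y i ^ 2 - j
      = ∑ i ∈ Icc 1 k, (y i ^ 2 + y i) + ((-y (k + 1)) ^ 2 + -y (k + 1)) := by
    rw [sum_Icc_succ_top (by omega), sum_add_distrib]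
    linear_combination hcon
  rw [← sub_eq_zero, hdefect, add_eq_zero_iff_of_nonneg
      (sum_nonneg fun i _ => Int.sq_add_self_nonneg (y i)) (Int.sq_add_self_nonneg _),
    sum_sq_add_self_eq_zero_iff, Int.sq_add_self_eq_zero_iff]
  by_cases hy : ∀ i ∈ Icc 1 k, y i = -1 ∨ y i = 0
  · have hsum := sum_eq_neg_card_filter_of_forall hy
    simp only [eq_true hy, true_and, and_true]
    omega
  · tauto

/-- Equality case: with `y (k+1) = j + ∑_{i=1}^k y i` and `j ≤ k`, one has
`∑_{i=1}^{k+1} (y i)^2 = j` iff either `y (k+1) = 0`, exactly `j` of `y 1, …, y k` equal `-1`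
and the rest equal `0`, or `y (k+1) = 1`, exactly `j - 1` of them equal `-1` and the rest `0`. -/
theorem sum_sq_eq_iff (k j : ℕ) (hk : 1 ≤ k) (hjk : j ≤ k) (y : ℕ → ℤ)
    (hcon : y (k + 1) = (j : ℤ) + ∑ i ∈ Finset.Icc 1 k, y i) :
    (∑ i ∈ Finset.Icc 1 (k + 1), (y i) ^ 2 = (j : ℤ)) ↔
      ((y (k + 1) = 0 ∧ ((Finset.Icc 1 k).filter fun i => y i = -1).card = j ∧
          ∀ i ∈ Finset.Icc 1 k, y i = -1 ∨ y i = 0) ∨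
       (y (k + 1) = 1 ∧ ((Finset.Icc 1 k).filter fun i => y i = -1).card + 1 = j ∧
          ∀ i ∈ Finset.Icc 1 k, y i = -1 ∨ y i = 0)) :=
  sum_sq_eq_iff_general k j y hcon
end

section
/- Let w ∈ S_n and let γ_{h,l} = s_{n_h} ··· s_{n_{l+1}-1}. Then ℓ(w · γ_{h,l}) = ℓ(w) - (n_{l+1} - n_h) if and only if w(n_h) > max{w(n_h + 1), w(n_h + 2), ..., w(n_{l+1})}. -/
/-!
Right multiplication by an adjacent transposition `s = (a a+1)` changes the number of
inversions by exactly one: it adds the inversion `(a, a+1)` if `w a < w (a+1)` and removes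
it otherwise.
Hence `ℓ(w γ) ≥ ℓ(w) - (n_{l+1} - n_h)`. Writing `γ_{h,l} = s_{n_h} γ'`, the factors of `γ`
carry the value `w(n_h)` rightwards past `w(n_h+1), …, w(n_{l+1})` one step at a time, so
the bound is attained iff every step removes an inversion, i.e. iff `w(n_h)` exceeds each of
these values; formally this is an induction on `n_{l+1} - n_h`.
-/

/-- The number of inversions of a permutation of `Fin n`. -/
def invCount {n : ℕ} (w : Equiv.Perm (Fin n)) : ℕ :=
  (Finset.univ.filter fun p : Fin n × Fin n => p.1 < p.2 ∧ w p.2 < w p.1).card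

/-- The simple transposition `s_m` (1-based) of `S_n`, swapping positions `m` and `m+1`. -/
def sTrans (n : ℕ) [NeZero n] (m : ℕ) : Equiv.Perm (Fin n) :=
  Equiv.swap (Fin.ofNat n (m - 1 : ℕ)) (Fin.ofNat n (m : ℕ))

open Equiv

section Swap

variable {n : ℕ} {a b : Fin n}

theorem swap_apply_lt_swap_apply_iff (hab : a.val + 1 = b.val) (i j : Fin n) :
    swap a b i < swap a b j ↔ i < j ∧ ¬(i = a ∧ j = b) ∨ i = b ∧ j = a := by
  simp only [swap_apply_def, Fin.lt_def, Fin.ext_iff]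
  split_ifs <;> omega

theorem invCount_mul_swap_of_lt (w : Perm (Fin n)) (hab : a.val + 1 = b.val) (h : w a < w b) :
    invCount (w * swap a b) = invCount w + 1 := by
  have hba : ¬ b < a := by rw [Fin.lt_def]; omega
  calc invCount (w * swap a b)
      = (Finset.univ.filter fun q : Fin n × Fin n =>
          swap a b q.1 < swap a b q.2 ∧ w q.2 < w q.1).card :=
        Finset.card_equiv (prodCongr (swap a b) (swap a b)) fun p => by
          rw [Finset.mem_filter, Finset.mem_filter]
          simp
    _ = (insert (b, a) (Finset.univ.filter fun q : Fin n × Fin n =>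
          q.1 < q.2 ∧ w q.2 < w q.1)).card := by
        congr 1
        ext ⟨i, j⟩
        simp only [swap_apply_lt_swap_apply_iff hab, Finset.mem_filter, Finset.mem_insert,
          Finset.mem_univ, true_and, Prod.mk.injEq]
        grind
    _ = invCount w + 1 := Finset.card_insert_of_notMem (by simp [hba])

theorem invCount_mul_swap_add_one_of_gt (w : Perm (Fin n)) (hab : a.val + 1 = b.val)
    (h : w b < w a) : invCount (w * swap a b) + 1 = invCount w := by
  simpa [mul_assoc] using
    (invCount_mul_swap_of_lt (w * swap a b) hab (by simpa using h)).symm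

theorem invCount_le_invCount_mul_swap_add_one (w : Perm (Fin n)) (hab : a.val + 1 = b.val) :
    invCount w ≤ invCount (w * swap a b) + 1 := by
  have hne : w a ≠ w b := w.injective.ne (by rintro rfl; omega)
  rcases hne.lt_or_gt with h | h
  · rw [invCount_mul_swap_of_lt w hab h]; omega
  · rw [invCount_mul_swap_add_one_of_gt w hab h]

end Swap

/-- `s_i s_{i+1} ⋯ s_{i+k-1}`; the paper's `γ_{h,l}` is `sTransProd n n_h (n_{l+1} - n_h)`. -/
def sTransProd (n : ℕ) [NeZero n] (i k : ℕ) : Perm (Fin n) :=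
  ((List.range k).map fun r => sTrans n (i + r)).prod

section SimpleTranspositions

variable {n : ℕ} [NeZero n]

theorem sTrans_eq_swap {a b : Fin n} (hab : a.val + 1 = b.val) :
    sTrans n b.val = swap a b := by
  rw [sTrans]
  congr 1 <;> ext
  · rw [Fin.val_ofNat, Nat.mod_eq_of_lt (by omega)]
    omega
  · exact Nat.mod_eq_of_lt b.isLt

theorem sTransProd_zero (i : ℕ) : sTransProd n i 0 = 1 := rfl

theorem sTransProd_succ (i k : ℕ) :
    sTransProd n i (k + 1) = sTrans n i * sTransProd n (i + 1) k := by
  simp only [sTransProd, List.range_succ_eq_map, List.map_cons, List.map_map, List.prod_cons,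
    Nat.add_zero]
  congr 3
  funext r
  simp only [Function.comp_apply]
  congr 1
  omega

theorem invCount_le_invCount_mul_sTransProd_add (w : Perm (Fin n))
    (a : Fin n) (k : ℕ) (hk : a.val + k < n) :
    invCount w ≤ invCount (w * sTransProd n (a.val + 1) k) + k := by
  induction k generalizing a w with
  | zero => simp [sTransProd_zero]
  | succ k ih =>
    obtain ⟨b, hab⟩ : ∃ b : Fin n, a.val + 1 = b.val := ⟨⟨a.val + 1, by omega⟩, rfl⟩
    rw [sTransProd_succ, hab, sTrans_eq_swap hab, ← mul_assoc]
    have := invCount_le_invCount_mul_swap_add_one w hab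
    have := ih (w * swap a b) b (by omega)
    omega

theorem invCount_mul_sTransProd_add_eq_iff (w : Perm (Fin n))
    (a : Fin n) (k : ℕ) (hk : a.val + k < n) :
    invCount (w * sTransProd n (a.val + 1) k) + k = invCount w ↔
      ∀ m : Fin n, a < m → m.val ≤ a.val + k → w m < w a := by
  induction k generalizing a w with
  | zero =>
    simp only [sTransProd_zero, mul_one, add_zero, Fin.lt_def, true_iff]
    intro m h1 h2
    omega
  | succ k ih =>
    obtain ⟨b, hab⟩ : ∃ b : Fin n, a.val + 1 = b.val := ⟨⟨a.val + 1, by omega⟩, rfl⟩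
    rw [sTransProd_succ, hab, sTrans_eq_swap hab, ← mul_assoc]
    set w' := w * swap a b
    have hw'b : w' b = w a := by simp [w']
    have hw' : ∀ m, b < m → w' m = w m := fun m hbm =>
      congrArg w (swap_apply_of_ne_of_ne (by rintro rfl; rw [Fin.lt_def] at hbm; omega) hbm.ne')
    have htail := ih w' b (by omega)
    constructor
    · intro h
      -- `h` forces equality in both `invCount w ≤ invCount w' + 1` and `hbound`
      have hbound := invCount_le_invCount_mul_sTransProd_add w' b k (by omega)
      have hba : w b < w a := by
        refine ((w.injective.ne ?_).lt_or_gt).resolve_left fun hlt => ?_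
        · rintro rfl; omega
        · have : invCount w' = invCount w + 1 := invCount_mul_swap_of_lt w hab hlt
          omega
      have hhead : invCount w' + 1 = invCount w := invCount_mul_swap_add_one_of_gt w hab hba
      have hR := htail.1 (by omega)
      intro m ham hmk
      rcases eq_or_lt_of_le (show b ≤ m by rw [Fin.lt_def] at ham; rw [Fin.le_def]; omega)
        with rfl | hbm
      · exact hba
      · simpa only [hw'b, hw' m hbm] using hR m hbm (by omega)
    · intro hR
      have hba : w b < w a := hR b (by rw [Fin.lt_def]; omega) (by omega)
      have : invCount w' + 1 = invCount w := invCount_mul_swap_add_one_of_gt w hab hba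
      have := htail.2 fun m hbm hmk => by
        rw [hw'b, hw' m hbm]
        exact hR m (hbm.trans' (by rw [Fin.lt_def]; omega)) (by omega)
      omega

end SimpleTranspositions

theorem length_mul_gamma_iff_general (n nh nl1 : ℕ) [NeZero n]
    (h3 : nl1 ≤ n)
    (γ : Equiv.Perm (Fin n))
    (hγ : γ = ((List.range (nl1 - nh)).map fun r => sTrans n (nh + r)).prod)
    (w : Equiv.Perm (Fin n)) (a : Fin n) (ha : a.val + 1 = nh) :
    invCount (w * γ) + (nl1 - nh) = invCount w ↔
      ∀ m : Fin n, nh < m.val + 1 → m.val + 1 ≤ nl1 → w m < w a := by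
  subst ha
  rw [show γ = sTransProd n (a.val + 1) (nl1 - (a.val + 1)) from hγ,
    invCount_mul_sTransProd_add_eq_iff w a _ (by omega)]
  refine forall_congr' fun m => ?_
  rw [Fin.lt_def]
  constructor <;> intro h h1 h2 <;> exact h (by omega) (by omega)

/-- For `w ∈ S_n` and `γ_{h,l} = s_{n_h} ⋯ s_{n_{l+1}-1}`, one has
`ℓ(w·γ_{h,l}) = ℓ(w) - (n_{l+1} - n_h)` iff `w(n_h) > max{w(n_h+1), …, w(n_{l+1})}`. -/
theorem length_mul_gamma_iff (n nh nl1 : ℕ) [NeZero n]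
    (h1 : 1 ≤ nh) (h2 : nh < nl1) (h3 : nl1 ≤ n)
    (γ : Equiv.Perm (Fin n))
    (hγ : γ = ((List.range (nl1 - nh)).map fun r => sTrans n (nh + r)).prod)
    (w : Equiv.Perm (Fin n)) (a : Fin n) (ha : a.val + 1 = nh) :
    invCount (w * γ) + (nl1 - nh) = invCount w ↔
      ∀ m : Fin n, nh < m.val + 1 → m.val + 1 ≤ nl1 → w m < w a :=
  length_mul_gamma_iff_general n nh nl1 h3 γ hγ w a ha
end
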